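/- Let b ≥ 0 be measurable on (0,∞)² satisfying hypotheses (B.0) and (B.10) with δ₂ ∈ (0,1). For r > 1 define δ_r := inf_{y>0} { 1 − y^{−r}·∫₀^y x^r b(x,y) dx }. Then δ_r ∈ (0,1); more precisely, δ_r ≥ δ₂ for every r ≥ 2, and δ_r ≥ 1 − (1−δ₂)^{r−1} for every r ∈ (1,2). -/

import Mathlib

open MeasureTheory Set Real
open scoped ENNReal

section DeltaRAux

variable {b : ℝ → ℝ → ℝ}

private lemma deltaR_meas_slice (hb : Measurable (Function.uncurry b)) (y : ℝ) :
    Measurable (fun x => b x y) :=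
  hb.comp (measurable_id.prodMk measurable_const)

/-- Integrability of `x^s * b x y` on `(0,y)` for real `s ≥ 1`. -/
private lemma deltaR_integrableOn_rpow_mul (hb : Measurable (Function.uncurry b))
    (hbnn : ∀ x y : ℝ, 0 < x → 0 < y → 0 ≤ b x y)
    (hB0int : ∀ y : ℝ, 0 < y → IntegrableOn (fun x => x * b x y) (Ioo 0 y))
    {y : ℝ} (hy : 0 < y) {s : ℝ} (hs : 1 ≤ s) :
    IntegrableOn (fun x => x ^ s * b x y) (Ioo 0 y) := by
  have hmeas : Measurable fun x : ℝ => x ^ s * b x y :=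
    (measurable_id.pow_const s).mul (deltaR_meas_slice hb y)
  refine Integrable.mono' (((hB0int y hy).const_mul (y ^ (s - 1)))) hmeas.aestronglyMeasurable ?_
  filter_upwards [ae_restrict_mem measurableSet_Ioo] with x hx
  obtain ⟨hx0, hxy⟩ := hx
  have hbx : 0 ≤ b x y := hbnn x y hx0 hy
  have h1 : x ^ (s - 1) * x = x ^ s := by
    rw [← Real.rpow_add_one hx0.ne' (s - 1), sub_add_cancel]
  have h2 : x ^ (s - 1) ≤ y ^ (s - 1) :=
    Real.rpow_le_rpow hx0.le hxy.le (by linarith)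
  have h3 : (0:ℝ) ≤ x ^ s := Real.rpow_nonneg hx0.le s
  rw [Real.norm_of_nonneg (mul_nonneg h3 hbx), ← h1]
  have : x ^ (s - 1) * x * b x y ≤ y ^ (s - 1) * x * b x y := by
    apply mul_le_mul_of_nonneg_right (mul_le_mul_of_nonneg_right h2 hx0.le) hbx
  linarith [this]

/-- Integrability of `x^2 * b x y` (natural power) on `(0,y)`. -/
private lemma deltaR_integrableOn_sq_mul (hb : Measurable (Function.uncurry b))
    (hbnn : ∀ x y : ℝ, 0 < x → 0 < y → 0 ≤ b x y)
    (hB0int : ∀ y : ℝ, 0 < y → IntegrableOn (fun x => x * b x y) (Ioo 0 y))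
    {y : ℝ} (hy : 0 < y) :
    IntegrableOn (fun x => x ^ 2 * b x y) (Ioo 0 y) := by
  have h := deltaR_integrableOn_rpow_mul hb hbnn hB0int hy (s := 2) one_le_two
  refine h.congr_fun (fun x _ => ?_) measurableSet_Ioo
  beta_reduce
  rw [show ((2:ℝ) : ℝ) = ((2:ℕ) : ℝ) by norm_num, Real.rpow_natCast]

/-- Positivity of `∫ x^r b` on `(0,y)`. -/
private lemma deltaR_integral_pos
    (hbnn : ∀ x y : ℝ, 0 < x → 0 < y → 0 ≤ b x y)
    (hB0 : ∀ y : ℝ, 0 < y → (∫ x in Ioo 0 y, x * b x y) = y)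
    {y r : ℝ} (hy : 0 < y)
    (hint : IntegrableOn (fun x => x ^ r * b x y) (Ioo 0 y)) :
    0 < ∫ x in Ioo 0 y, x ^ r * b x y := by
  have hnn : 0 ≤ᵐ[volume.restrict (Ioo 0 y)] fun x => x ^ r * b x y := by
    filter_upwards [ae_restrict_mem measurableSet_Ioo] with x hx
    exact mul_nonneg (Real.rpow_nonneg hx.1.le r) (hbnn x y hx.1 hy)
  rcases lt_or_eq_of_le (integral_nonneg_of_ae hnn) with h | h
  · exact h
  exfalso
  have hz : (fun x => x ^ r * b x y) =ᵐ[volume.restrict (Ioo 0 y)] 0 :=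
    (integral_eq_zero_iff_of_nonneg_ae hnn hint).mp h.symm
  have hz1 : (fun x => x * b x y) =ᵐ[volume.restrict (Ioo 0 y)] 0 := by
    filter_upwards [ae_restrict_mem measurableSet_Ioo, hz] with x hx hxz
    have : b x y = 0 := by
      have hxr : (0:ℝ) < x ^ r := Real.rpow_pos_of_pos hx.1 r
      rcases mul_eq_zero.mp hxz with h' | h'
      · exact absurd h' hxr.ne'
      · exact h'
    simp [this]
  have : (∫ x in Ioo 0 y, x * b x y) = 0 := integral_eq_zero_of_ae hz1
  rw [hB0 y hy] at this
  exact hy.ne' this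

/-- The bound for `r ≥ 2`. -/
private lemma deltaR_bound_ge_two {δ₂ : ℝ}
    (hbnn : ∀ x y : ℝ, 0 < x → 0 < y → 0 ≤ b x y)
    (hB10 : ∀ y : ℝ, 0 < y → (∫ x in Ioo 0 y, x ^ 2 * b x y) ≤ (1 - δ₂) * y ^ 2)
    {y r : ℝ} (hy : 0 < y) (hr : 2 ≤ r)
    (hintr : IntegrableOn (fun x => x ^ r * b x y) (Ioo 0 y))
    (hint2 : IntegrableOn (fun x => x ^ 2 * b x y) (Ioo 0 y)) :
    (∫ x in Ioo 0 y, x ^ r * b x y) ≤ (1 - δ₂) * y ^ r := by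
  have step1 : (∫ x in Ioo 0 y, x ^ r * b x y)
      ≤ ∫ x in Ioo 0 y, y ^ (r - 2) * (x ^ 2 * b x y) := by
    refine integral_mono_ae hintr (hint2.const_mul _) ?_
    filter_upwards [ae_restrict_mem measurableSet_Ioo] with x hx
    obtain ⟨hx0, hxy⟩ := hx
    have hbx : 0 ≤ b x y := hbnn x y hx0 hy
    have h1 : x ^ r = x ^ (r - 2) * x ^ (2:ℕ) := by
      rw [← Real.rpow_natCast x 2, ← Real.rpow_add hx0]
      norm_num
    have h2 : x ^ (r - 2) ≤ y ^ (r - 2) :=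
      Real.rpow_le_rpow hx0.le hxy.le (by linarith)
    rw [h1, mul_assoc]
    exact mul_le_mul_of_nonneg_right h2 (mul_nonneg (by positivity) hbx)
  rw [integral_const_mul] at step1
  have step2 : y ^ (r - 2) * (∫ x in Ioo 0 y, x ^ 2 * b x y)
      ≤ y ^ (r - 2) * ((1 - δ₂) * y ^ 2) :=
    mul_le_mul_of_nonneg_left (hB10 y hy) (Real.rpow_nonneg hy.le _)
  have h3 : y ^ (r - 2) * ((1 - δ₂) * y ^ 2) = (1 - δ₂) * y ^ r := by
    rw [← Real.rpow_natCast y 2, ← mul_assoc, mul_comm (y ^ (r-2)) (1-δ₂), mul_assoc,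
      ← Real.rpow_add hy]
    norm_num
  linarith

/-- The Hölder bound for `1 < r < 2`. -/
private lemma deltaR_bound_lt_two {δ₂ : ℝ} (hb : Measurable (Function.uncurry b))
    (hbnn : ∀ x y : ℝ, 0 < x → 0 < y → 0 ≤ b x y)
    (hB0 : ∀ y : ℝ, 0 < y → (∫ x in Ioo 0 y, x * b x y) = y)
    (hB10 : ∀ y : ℝ, 0 < y → (∫ x in Ioo 0 y, x ^ 2 * b x y) ≤ (1 - δ₂) * y ^ 2)
    (hδ₂ : δ₂ < 1)
    {y r : ℝ} (hy : 0 < y) (hr1 : 1 < r) (hr2 : r < 2)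
    (hint1 : IntegrableOn (fun x => x * b x y) (Ioo 0 y))
    (hintr : IntegrableOn (fun x => x ^ r * b x y) (Ioo 0 y))
    (hint2 : IntegrableOn (fun x => x ^ 2 * b x y) (Ioo 0 y)) :
    (∫ x in Ioo 0 y, x ^ r * b x y) ≤ (1 - δ₂) ^ (r - 1) * y ^ r := by
  set μ := volume.restrict (Ioo 0 y) with hμ
  have hbm : Measurable fun x => b x y := deltaR_meas_slice hb y
  set f : ℝ → ℝ≥0∞ := fun x => ENNReal.ofReal (x * b x y) with hf
  set g : ℝ → ℝ≥0∞ := fun x => ENNReal.ofReal (x ^ 2 * b x y) with hg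
  have hfm : AEMeasurable f μ :=
    (ENNReal.measurable_ofReal.comp (measurable_id.mul hbm)).aemeasurable
  have hgm : AEMeasurable g μ :=
    (ENNReal.measurable_ofReal.comp ((measurable_id.pow_const 2).mul hbm)).aemeasurable
  have hp : (0:ℝ) ≤ 2 - r := by linarith
  have hq : (0:ℝ) ≤ r - 1 := by linarith
  have key := ENNReal.lintegral_mul_norm_pow_le (μ := μ) hfm hgm hp hq (by ring)
  have hnn1 : 0 ≤ᵐ[μ] fun x => x * b x y := by
    filter_upwards [ae_restrict_mem measurableSet_Ioo] with x hx
    exact mul_nonneg hx.1.le (hbnn x y hx.1 hy)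
  have hnn2 : 0 ≤ᵐ[μ] fun x => x ^ 2 * b x y := by
    filter_upwards [ae_restrict_mem measurableSet_Ioo] with x hx
    exact mul_nonneg (by positivity) (hbnn x y hx.1 hy)
  have hnnr : 0 ≤ᵐ[μ] fun x => x ^ r * b x y := by
    filter_upwards [ae_restrict_mem measurableSet_Ioo] with x hx
    exact mul_nonneg (Real.rpow_nonneg hx.1.le r) (hbnn x y hx.1 hy)
  have hcongr : ∫⁻ x, f x ^ (2 - r) * g x ^ (r - 1) ∂μ
      = ∫⁻ x, ENNReal.ofReal (x ^ r * b x y) ∂μ := by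
    refine lintegral_congr_ae ?_
    filter_upwards [ae_restrict_mem measurableSet_Ioo] with x hx
    obtain ⟨hx0, hxy⟩ := hx
    have hc : 0 ≤ b x y := hbnn x y hx0 hy
    rw [hf, hg]
    simp only
    rw [ENNReal.ofReal_rpow_of_nonneg (mul_nonneg hx0.le hc) hp,
      ENNReal.ofReal_rpow_of_nonneg (mul_nonneg (by positivity) hc) hq,
      ← ENNReal.ofReal_mul (Real.rpow_nonneg (mul_nonneg hx0.le hc) _)]
    congr 1
    rcases hc.eq_or_lt with hc0 | hc0
    · rw [← hc0, mul_zero, mul_zero, Real.zero_rpow (by linarith), mul_zero, zero_mul]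
    · rw [Real.mul_rpow hx0.le hc0.le, Real.mul_rpow (by positivity) hc0.le]
      have e1 : (x ^ 2 : ℝ) ^ (r - 1) = x ^ (2 * (r - 1)) := by
        rw [← Real.rpow_natCast x 2, ← Real.rpow_mul hx0.le]
        norm_num
      have e2 : b x y ^ (2 - r) * b x y ^ (r - 1) = b x y := by
        rw [← Real.rpow_add hc0, show 2 - r + (r - 1) = 1 by ring, Real.rpow_one]
      have e3 : x ^ (2 - r) * x ^ (2 * (r - 1)) = x ^ r := by
        rw [← Real.rpow_add hx0, show 2 - r + 2 * (r - 1) = r by ring]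
      rw [e1, show x ^ (2 - r) * b x y ^ (2 - r) * (x ^ (2 * (r - 1)) * b x y ^ (r - 1))
          = x ^ (2 - r) * x ^ (2 * (r - 1)) * (b x y ^ (2 - r) * b x y ^ (r - 1)) from by ring,
        e3, e2]
  have lf : ∫⁻ x, f x ∂μ = ENNReal.ofReal y := by
    rw [hf, ← ofReal_integral_eq_lintegral_ofReal hint1 hnn1, hB0 y hy]
  have lg : ∫⁻ x, g x ∂μ = ENNReal.ofReal (∫ x in Ioo 0 y, x ^ 2 * b x y) := by
    rw [hg, ← ofReal_integral_eq_lintegral_ofReal hint2 hnn2]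
  have lr : ENNReal.ofReal (∫ x in Ioo 0 y, x ^ r * b x y)
      = ∫⁻ x, ENNReal.ofReal (x ^ r * b x y) ∂μ :=
    ofReal_integral_eq_lintegral_ofReal hintr hnnr
  have hg_le : (∫⁻ x, g x ∂μ) ^ (r - 1) ≤ ENNReal.ofReal ((1 - δ₂) * y ^ 2) ^ (r - 1) := by
    refine ENNReal.rpow_le_rpow ?_ hq
    rw [lg]
    exact ENNReal.ofReal_le_ofReal (hB10 y hy)
  have main : ENNReal.ofReal (∫ x in Ioo 0 y, x ^ r * b x y)
      ≤ ENNReal.ofReal y ^ (2 - r) * ENNReal.ofReal ((1 - δ₂) * y ^ 2) ^ (r - 1) := by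
    rw [lr, ← hcongr]
    refine le_trans key ?_
    rw [lf]
    exact mul_le_mul_right hg_le _
  have hrhs : ENNReal.ofReal y ^ (2 - r) * ENNReal.ofReal ((1 - δ₂) * y ^ 2) ^ (r - 1)
      = ENNReal.ofReal ((1 - δ₂) ^ (r - 1) * y ^ r) := by
    have h2 : (0:ℝ) ≤ (1 - δ₂) * y ^ 2 := mul_nonneg (by linarith) (sq_nonneg y)
    rw [ENNReal.ofReal_rpow_of_nonneg hy.le hp, ENNReal.ofReal_rpow_of_nonneg h2 hq,
      ← ENNReal.ofReal_mul (Real.rpow_nonneg hy.le _)]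
    congr 1
    rw [Real.mul_rpow (by linarith) (by positivity)]
    have e1 : (y ^ 2 : ℝ) ^ (r - 1) = y ^ (2 * (r - 1)) := by
      rw [← Real.rpow_natCast y 2, ← Real.rpow_mul hy.le]
      norm_num
    rw [e1, show y ^ (2 - r) * ((1 - δ₂) ^ (r - 1) * y ^ (2 * (r - 1)))
        = (1 - δ₂) ^ (r - 1) * (y ^ (2 - r) * y ^ (2 * (r - 1))) from by ring,
      ← Real.rpow_add hy, show 2 - r + 2 * (r - 1) = r by ring]
  rw [hrhs] at main
  exact (ENNReal.ofReal_le_ofReal_iff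
    (mul_nonneg (Real.rpow_nonneg (by linarith) _) (Real.rpow_nonneg hy.le _))).mp main

end DeltaRAux

/-- under (B.0) and (B.10), for `r > 1` the quantity
`δ_r = inf_{y>0} {1 − y^{−r} ∫₀^y x^r b(x,y) dx}` belongs to `(0,1)`; moreover
`δ_r ≥ δ₂` for `r ≥ 2` and `δ_r ≥ 1 − (1−δ₂)^{r−1}` for `r ∈ (1,2)`. -/
theorem delta_r_bounds (b : ℝ → ℝ → ℝ) (δ₂ r : ℝ)
    (hb : Measurable (Function.uncurry b))
    (hbnn : ∀ x y : ℝ, 0 < x → 0 < y → 0 ≤ b x y)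
    (hB0int : ∀ y : ℝ, 0 < y → IntegrableOn (fun x => x * b x y) (Ioo 0 y))
    (hB0 : ∀ y : ℝ, 0 < y → (∫ x in Ioo 0 y, x * b x y) = y)
    (hδ₂ : δ₂ ∈ Ioo (0 : ℝ) 1)
    (hB10 : ∀ y : ℝ, 0 < y → (∫ x in Ioo 0 y, x ^ 2 * b x y) ≤ (1 - δ₂) * y ^ 2)
    (hr : 1 < r) :
    sInf ((fun y => 1 - (∫ x in Ioo 0 y, x ^ r * b x y) / y ^ r) '' Ioi 0) ∈
        Ioo (0 : ℝ) 1 ∧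
      (2 ≤ r →
        δ₂ ≤ sInf ((fun y => 1 - (∫ x in Ioo 0 y, x ^ r * b x y) / y ^ r) '' Ioi 0)) ∧
      (r < 2 →
        1 - (1 - δ₂) ^ (r - 1) ≤
          sInf ((fun y => 1 - (∫ x in Ioo 0 y, x ^ r * b x y) / y ^ r) '' Ioi 0)) := by
  obtain ⟨hδ0, hδ1⟩ := hδ₂
  set F : ℝ → ℝ := fun y => 1 - (∫ x in Ioo 0 y, x ^ r * b x y) / y ^ r with hFdef
  set S : Set ℝ := F '' Ioi 0 with hSdef
  have hintr : ∀ y : ℝ, 0 < y → IntegrableOn (fun x => x ^ r * b x y) (Ioo 0 y) :=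
    fun y hy => deltaR_integrableOn_rpow_mul hb hbnn hB0int hy hr.le
  have hint2 : ∀ y : ℝ, 0 < y → IntegrableOn (fun x => x ^ 2 * b x y) (Ioo 0 y) :=
    fun y hy => deltaR_integrableOn_sq_mul hb hbnn hB0int hy
  -- the generic lower-bound machine
  have key : ∀ C : ℝ, (∀ y : ℝ, 0 < y → (∫ x in Ioo 0 y, x ^ r * b x y) ≤ C * y ^ r) →
      ∀ z ∈ S, 1 - C ≤ z := by
    rintro C hC z ⟨y, hy, rfl⟩
    rw [mem_Ioi] at hy
    have hyr : (0:ℝ) < y ^ r := Real.rpow_pos_of_pos hy r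
    have : (∫ x in Ioo 0 y, x ^ r * b x y) / y ^ r ≤ C :=
      (div_le_iff₀ hyr).mpr (hC y hy)
    simp only [hFdef]
    linarith
  have hge2 : 2 ≤ r → ∀ z ∈ S, δ₂ ≤ z := by
    intro h2 z hz
    have := key (1 - δ₂)
      (fun y hy => deltaR_bound_ge_two hbnn hB10 hy h2 (hintr y hy) (hint2 y hy)) z hz
    linarith
  have hlt2 : r < 2 → ∀ z ∈ S, 1 - (1 - δ₂) ^ (r - 1) ≤ z := by
    intro h2 z hz
    exact key ((1 - δ₂) ^ (r - 1))
      (fun y hy => deltaR_bound_lt_two hb hbnn hB0 hB10 hδ1 hy hr h2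
        (hB0int y hy) (hintr y hy) (hint2 y hy)) z hz
  have hne : S.Nonempty := ⟨F 1, mem_image_of_mem F (mem_Ioi.mpr one_pos)⟩
  have hmem1 : F 1 ∈ S := mem_image_of_mem F (mem_Ioi.mpr one_pos)
  have hL0 : ∀ z ∈ S, (0:ℝ) < if 2 ≤ r then δ₂ else 1 - (1 - δ₂) ^ (r - 1) := by
    intro z hz
    split_ifs with h2
    · exact hδ0
    · push_neg at h2
      have : (1 - δ₂) ^ (r - 1) < 1 :=
        Real.rpow_lt_one (by linarith) (by linarith) (by linarith)
      linarith
  have hlow : ∀ z ∈ S, (if 2 ≤ r then δ₂ else 1 - (1 - δ₂) ^ (r - 1)) ≤ z := by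
    intro z hz
    split_ifs with h2
    · exact hge2 h2 z hz
    · exact hlt2 (by push_neg at h2; exact h2) z hz
  have hbdd : BddBelow S := ⟨_, hlow⟩
  have hF1lt : F 1 < 1 := by
    have hpos : 0 < ∫ x in Ioo 0 1, x ^ r * b x 1 :=
      deltaR_integral_pos hbnn hB0 one_pos (hintr 1 one_pos)
    simp only [hFdef]
    rw [Real.one_rpow, div_one]
    linarith
  constructor
  · constructor
    · exact lt_of_lt_of_le (hL0 _ hmem1) (le_csInf hne hlow)
    · exact lt_of_le_of_lt (csInf_le hbdd hmem1) hF1lt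
  refine ⟨fun h2 => le_csInf hne (hge2 h2), fun h2 => le_csInf hne (hlt2 h2)⟩
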